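/- Let φ be the Laplace transform of a probability distribution on [0,∞) satisfying φ(t) ≤ E ∏_{|v|=n} φ(L(v)t) for all t ≥ 0 and n, and suppose that L_n* := sup_{|v|=n} L(v) → ∞ almost surely on an event S with P(S) = 1 − q > 0. Then φ(t) ≤ q + (1−q)φ(∞) for all t > 0, where φ(∞) := lim_{s→∞} φ(s); consequently, by continuity of φ at 0 with φ(0) = 1, φ ≡ 1, i.e., the underlying distribution is the point mass at 0. -/

import Mathlib

open MeasureTheory ProbabilityTheory ENNReal NNReal Filter

noncomputable section

abbrev UHTree := List ℕ

/-- The branch weight `L(v)`: `L(∅) = 1`, `L(vi) = L(v) T_i(v)`. -/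
def branchL {Ω : Type*} : (UHTree → ℕ → Ω → ℝ≥0∞) → UHTree → Ω → ℝ≥0∞
  | _, [], _ => 1
  | T, i :: v, ω => T (.nil) i ω * branchL (fun u j => T (i :: u) j) v ω

/-- The random pair `(C(v), T(v))` attached to vertex `v`. -/
def pairRV {Ω : Type*} (C : UHTree → Ω → ℝ≥0∞) (T : UHTree → ℕ → Ω → ℝ≥0∞) (v : UHTree)
    (ω : Ω) : ℝ≥0∞ × (ℕ → ℝ≥0∞) :=
  (C v ω, fun i => T v i ω)

/-- `e^{-y}` for `y ∈ [0,∞]`, with `e^{-∞} = 0`. -/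
def eexp (y : ℝ≥0∞) : ℝ := if y = ∞ then 0 else Real.exp (-y.toReal)

/-- The multiplicative martingale
`M_n(t) = exp(-t Σ_{|u|<n} L(u)C(u)) ∏_{|v|=n} ψ(L(v)t)`. -/
def multMart {Ω : Type*} (C : UHTree → Ω → ℝ≥0∞) (T : UHTree → ℕ → Ω → ℝ≥0∞)
    (ψ : ℝ≥0∞ → ℝ) (n : ℕ) (t : ℝ≥0) (ω : Ω) : ℝ :=
  eexp ((t : ℝ≥0∞) * ∑' u : {u : UHTree // u.length < n}, branchL T u ω * C u ω) *
    ∏' v : {v : UHTree // v.length = n}, ψ (branchL T v ω * t)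

/-- The σ-algebra generated by the weights attached to vertices of length `< n`. -/
def treeFiltration {Ω : Type*} (C : UHTree → Ω → ℝ≥0∞) (T : UHTree → ℕ → Ω → ℝ≥0∞)
    (n : ℕ) : MeasurableSpace Ω :=
  ⨆ v : {v : UHTree // v.length < n}, MeasurableSpace.comap (pairRV C T v) inferInstance

/-- Maximal branch weight in generation `n`. -/
def Lstar {Ω : Type*} (T : UHTree → ℕ → Ω → ℝ≥0∞) (n : ℕ) (ω : Ω) : ℝ≥0∞ :=
  ⨆ v : {v : UHTree // v.length = n}, branchL T v ω

/-! Each factor of `∏_{|v|=n} φ(L(v)t)` lies in `[0,1]`, so the product is at most every factor,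
hence at most `φ(L_n* t)` because the Laplace transform `φ` is continuous and decreasing on
`[0,∞]`. On `S` we have `L_n* t → ∞`, so by dominated convergence `E φ(L_n* t)` is asymptotically
at most `q + (1-q) φ(∞)`. Letting `t → 0` gives `1 ≤ q + (1-q) φ(∞)`, so `φ(∞) = 1` and `φ ≡ 1`;
finally `E e^{-X} = 1` forces `X = 0` almost surely. -/

lemma EReal.exp_neg_coe_ennreal_ne_top (y : ℝ≥0∞) : EReal.exp (-(y : EReal)) ≠ ∞ := by
  simp [EReal.exp_eq_top_iff]

lemma eexp_eq_toReal_exp (y : ℝ≥0∞) : eexp y = (EReal.exp (-(y : EReal))).toReal := by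
  induction y using ENNReal.recTopCoe with
  | top => simp [eexp]
  | coe y =>
    rw [eexp, if_neg ENNReal.coe_ne_top, ← EReal.coe_ennreal_toReal ENNReal.coe_ne_top,
      ← EReal.coe_neg, EReal.exp_coe, ENNReal.toReal_ofReal (Real.exp_pos _).le]

lemma continuous_eexp : Continuous eexp := by
  simp_rw [funext eexp_eq_toReal_exp]
  exact ENNReal.continuousOn_toReal.comp_continuous
    (ENNReal.continuous_exp.comp (continuous_neg.comp continuous_coe_ennreal_ereal))
    EReal.exp_neg_coe_ennreal_ne_top

lemma eexp_nonneg (y : ℝ≥0∞) : 0 ≤ eexp y := by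
  rw [eexp_eq_toReal_exp]; exact ENNReal.toReal_nonneg

lemma eexp_antitone : Antitone eexp := by
  intro y y' h
  simp only [eexp_eq_toReal_exp]
  exact ENNReal.toReal_mono (EReal.exp_neg_coe_ennreal_ne_top y)
    (EReal.exp_monotone (EReal.neg_le_neg_iff.2 (EReal.coe_ennreal_le_coe_ennreal_iff.2 h)))

lemma eexp_zero : eexp 0 = 1 := by simp [eexp]

lemma eexp_le_one (y : ℝ≥0∞) : eexp y ≤ 1 :=
  eexp_zero ▸ eexp_antitone (zero_le : 0 ≤ y)

lemma eexp_eq_one_iff {y : ℝ≥0∞} : eexp y = 1 ↔ y = 0 := by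
  rw [eexp_eq_toReal_exp, ENNReal.toReal_eq_one_iff, ← EReal.exp_zero,
    EReal.exp_strictMono.injective.eq_iff]
  simp

def laplace (P : Measure ℝ≥0∞) (y : ℝ≥0∞) : ℝ := ∫ x, eexp (y * x) ∂P

section laplace

variable (P : Measure ℝ≥0∞)

lemma laplace_nonneg (y : ℝ≥0∞) : 0 ≤ laplace P y :=
  integral_nonneg fun _ => eexp_nonneg _

section finite

variable [IsFiniteMeasure P]

lemma integrable_eexp_mul (y : ℝ≥0∞) : Integrable (fun x => eexp (y * x)) P :=
  .of_bound (continuous_eexp.measurable.comp (measurable_id.const_mul y)).aestronglyMeasurable 1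
    (ae_of_all _ fun x => by rw [Real.norm_of_nonneg (eexp_nonneg _)]; exact eexp_le_one _)

lemma laplace_antitone : Antitone (laplace P) := fun y y' h =>
  integral_mono (integrable_eexp_mul P y') (integrable_eexp_mul P y)
    fun x => eexp_antitone (mul_le_mul_left h x)

lemma continuous_laplace (hP : P {∞} = 0) : Continuous (laplace P) := by
  refine continuous_of_dominated
    (fun y => (integrable_eexp_mul P y).aestronglyMeasurable) (bound := fun _ => 1)
    (fun y => ae_of_all _ fun x => ?_) (integrable_const 1) ?_
  · rw [Real.norm_of_nonneg (eexp_nonneg _)]; exact eexp_le_one _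
  · have hfin : ∀ᵐ x ∂P, x ≠ ∞ := measure_eq_zero_iff_ae_notMem.1 hP
    filter_upwards [hfin] with x hx
    exact continuous_eexp.comp (ENNReal.continuous_mul_const hx)

end finite

variable [IsProbabilityMeasure P]

lemma laplace_zero : laplace P 0 = 1 := by simp [laplace, eexp_zero]

lemma laplace_le_one (y : ℝ≥0∞) : laplace P y ≤ 1 :=
  laplace_zero P ▸ laplace_antitone P (zero_le : 0 ≤ y)

lemma laplace_top_eq_one (hP : P {∞} = 0) {p : ℝ} (hp : 0 < p)
    (h : ∀ t : ℝ≥0, 0 < t → laplace P t ≤ 1 - p + p * laplace P ∞) : laplace P ∞ = 1 := by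
  have hφ0 : Tendsto (fun t : ℝ≥0 => laplace P t) (nhdsWithin 0 (Set.Ioi 0)) (nhds 1) :=
    laplace_zero P ▸ (((continuous_laplace P hP).tendsto 0).comp
      (ENNReal.continuous_coe.tendsto 0)).mono_left nhdsWithin_le_nhds
  have h1 : 1 ≤ 1 - p + p * laplace P ∞ := le_of_tendsto hφ0 (eventually_mem_nhdsWithin.mono h)
  nlinarith [laplace_le_one P ∞]

lemma eq_dirac_zero_of_laplace_eq_one {y : ℝ≥0∞} (hy : y ≠ 0) (h : laplace P y = 1) :
    P = Measure.dirac 0 := by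
  have hint : ∫ x, (1 - eexp (y * x)) ∂P = 0 := by
    rw [integral_sub (integrable_const 1) (integrable_eexp_mul P y)]
    simp only [integral_const, probReal_univ, smul_eq_mul, mul_one]
    exact sub_eq_zero.2 h.symm
  have hone : ∀ᵐ x ∂P, 1 - eexp (y * x) = 0 :=
    (integral_eq_zero_iff_of_nonneg (fun x => sub_nonneg.2 (eexp_le_one _))
      ((integrable_const 1).sub (integrable_eexp_mul P y))).1 hint
  have hzero : ∀ᵐ x ∂P, id x = 0 := hone.mono fun x hx => by
    rw [sub_eq_zero, eq_comm, eexp_eq_one_iff, mul_eq_zero] at hx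
    exact hx.resolve_left hy
  simpa using (hasLaw_dirac_of_ae_eq hzero).map_eq

end laplace

section tprod

variable {ι : Type*} {f : ι → ℝ}

lemma bddBelow_range_prod_of_nonneg (h0 : ∀ i, 0 ≤ f i) :
    BddBelow (Set.range fun s : Finset ι => ∏ i ∈ s, f i) :=
  ⟨0, by rintro _ ⟨s, rfl⟩; exact s.prod_nonneg fun i _ => h0 i⟩

lemma hasProd_iInf_prod_of_nonneg_of_le_one (h0 : ∀ i, 0 ≤ f i) (h1 : ∀ i, f i ≤ 1) :
    HasProd f (⨅ s : Finset ι, ∏ i ∈ s, f i) :=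
  tendsto_atTop_ciInf (Finset.prod_anti_set_of_le_one h0 h1) (bddBelow_range_prod_of_nonneg h0)

lemma tprod_le_of_nonneg_of_le_one (h0 : ∀ i, 0 ≤ f i) (h1 : ∀ i, f i ≤ 1) (i : ι) :
    ∏' j, f j ≤ f i := by
  rw [(hasProd_iInf_prod_of_nonneg_of_le_one h0 h1).tprod_eq]
  exact ciInf_le_of_le (bddBelow_range_prod_of_nonneg h0) {i} (by simp)

end tprod

lemma tprod_le_apply_iSup {ι : Type*} [Nonempty ι] {f : ℝ≥0∞ → ℝ} (hf : Antitone f)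
    (hfc : Continuous f) (h0 : ∀ y, 0 ≤ f y) (h1 : ∀ y, f y ≤ 1) (g : ι → ℝ≥0∞) :
    ∏' i, f (g i) ≤ f (⨆ i, g i) := by
  rw [hf.map_ciSup_of_continuousAt hfc.continuousAt (OrderTop.bddAbove _)]
  exact le_ciInf fun i => tprod_le_of_nonneg_of_le_one (fun _ => h0 _) (fun _ => h1 _) i

lemma le_measure_compl_add_of_le_integral {Ω : Type*} [MeasurableSpace Ω] {μ : Measure Ω}
    [IsFiniteMeasure μ] {S : Set Ω} (hS : MeasurableSet S) {X : ℕ → Ω → ℝ≥0∞}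
    (hX : ∀ n, Measurable (X n))
    (hXS : ∀ᵐ ω ∂μ, ω ∈ S → Tendsto (fun n => X n ω) atTop (nhds ∞))
    {f : ℝ≥0∞ → ℝ} (hfm : Measurable f) (hf : ContinuousAt f ∞) (h0 : ∀ y, 0 ≤ f y)
    (h1 : ∀ y, f y ≤ 1) {c : ℝ} (hc : ∀ n, c ≤ ∫ ω, f (X n ω) ∂μ) :
    c ≤ (μ Sᶜ).toReal + (μ S).toReal * f ∞ := by
  classical
  have hbound (y : ℝ≥0∞) : ‖f y‖ ≤ 1 := by rw [Real.norm_of_nonneg (h0 y)]; exact h1 y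
  have hint (n : ℕ) : Integrable (fun ω => f (X n ω)) μ :=
    .of_bound (hfm.comp (hX n)).aestronglyMeasurable 1 (ae_of_all _ fun ω => hbound _)
  -- off `S` nothing is known about `X n`, so `f (X n)` is majorized there by `1`
  set g : ℕ → Ω → ℝ := fun n => S.piecewise (fun ω => f (X n ω)) fun _ => 1
  have hlim : Tendsto (fun n => ∫ ω, g n ω ∂μ) atTop
      (nhds (∫ ω, S.piecewise (fun _ => f ∞) (fun _ => 1) ω ∂μ)) := by
    refine tendsto_integral_of_dominated_convergence (fun _ => 1)
      (fun n => ((hfm.comp (hX n)).piecewise hS measurable_const).aestronglyMeasurable)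
      (integrable_const 1) (fun n => ae_of_all _ fun ω => ?_) ?_
    · by_cases hω : ω ∈ S
      · simpa [g, hω] using hbound _
      · simp [g, hω]
    · filter_upwards [hXS] with ω hω
      by_cases hωS : ω ∈ S
      · simpa [g, hωS, Function.comp_def] using hf.tendsto.comp (hω hωS)
      · simp [g, hωS]
  have hlim_eq : ∫ ω, S.piecewise (fun _ => f ∞) (fun _ => 1) ω ∂μ
      = (μ Sᶜ).toReal + (μ S).toReal * f ∞ := by
    rw [integral_piecewise hS (integrable_const _).integrableOn (integrable_const _).integrableOn]
    simp [measureReal_def]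
    ring
  refine hlim_eq ▸ ge_of_tendsto' hlim fun n => (hc n).trans (integral_mono (hint n) ?_ ?_)
  · exact .piecewise hS (hint n).integrableOn (integrable_const 1).integrableOn
  · intro ω
    by_cases hω : ω ∈ S <;> simp [g, hω, h1]

lemma measurable_branchL {Ω : Type*} [MeasurableSpace Ω] (v : UHTree) :
    ∀ {T : UHTree → ℕ → Ω → ℝ≥0∞}, (∀ u i, Measurable (T u i)) → Measurable (branchL T v) := by
  induction v with
  | nil => intro T _; exact measurable_const
  | cons i v ih => intro T hT; exact (hT [] i).mul (ih fun u j => hT (i :: u) j)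

lemma measurable_Lstar {Ω : Type*} [MeasurableSpace Ω] {T : UHTree → ℕ → Ω → ℝ≥0∞}
    (hT : ∀ u i, Measurable (T u i)) (n : ℕ) : Measurable (Lstar T n) :=
  .iSup fun v => measurable_branchL v.1 hT

lemma tprod_branchL_le_Lstar {Ω : Type*} {f : ℝ≥0∞ → ℝ} (hf : Antitone f) (hfc : Continuous f)
    (h0 : ∀ y, 0 ≤ f y) (h1 : ∀ y, f y ≤ 1) (T : UHTree → ℕ → Ω → ℝ≥0∞) (n : ℕ) (t : ℝ≥0∞)
    (ω : Ω) : ∏' v : {v : UHTree // v.length = n}, f (branchL T v ω * t) ≤ f (Lstar T n ω * t) := by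
  have : Nonempty {v : UHTree // v.length = n} := ⟨⟨List.replicate n 0, List.length_replicate⟩⟩
  rw [Lstar, ENNReal.iSup_mul]
  exact tprod_le_apply_iSup hf hfc h0 h1 _

lemma integral_tprod_branchL_le_integral_Lstar {Ω : Type*} [MeasurableSpace Ω] {μ : Measure Ω}
    [IsFiniteMeasure μ] {f : ℝ≥0∞ → ℝ} (hf : Antitone f) (hfc : Continuous f)
    (h0 : ∀ y, 0 ≤ f y) (h1 : ∀ y, f y ≤ 1) {T : UHTree → ℕ → Ω → ℝ≥0∞}
    (hT : ∀ u i, Measurable (T u i)) (n : ℕ) (t : ℝ≥0∞) :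
    ∫ ω, ∏' v : {v : UHTree // v.length = n}, f (branchL T v ω * t) ∂μ
      ≤ ∫ ω, f (Lstar T n ω * t) ∂μ := by
  refine integral_mono_of_nonneg (ae_of_all _ fun ω => tprod_nonneg fun _ => h0 _) ?_
    (ae_of_all _ (tprod_branchL_le_Lstar hf hfc h0 h1 T n t))
  refine .of_bound (hfc.measurable.comp ((measurable_Lstar hT n).mul_const t)).aestronglyMeasurable
    1 (ae_of_all _ fun ω => ?_)
  rw [Real.norm_of_nonneg (h0 _)]
  exact h1 _

lemma laplace_le_measure_compl_add_of_tendsto_Lstar {Ω : Type*} [MeasurableSpace Ω]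
    {μ : Measure Ω} [IsProbabilityMeasure μ] {T : UHTree → ℕ → Ω → ℝ≥0∞}
    (hT : ∀ u i, Measurable (T u i)) (P : Measure ℝ≥0∞) [IsProbabilityMeasure P]
    (hP : P {∞} = 0)
    (hsub : ∀ (t : ℝ≥0) (n : ℕ),
      laplace P t ≤ ∫ ω, ∏' v : {v : UHTree // v.length = n}, laplace P (branchL T v ω * t) ∂μ)
    {S : Set Ω} (hS : MeasurableSet S)
    (hLstar : ∀ᵐ ω ∂μ, ω ∈ S → Tendsto (fun n => Lstar T n ω) atTop (nhds ∞))
    {t : ℝ≥0} (ht : 0 < t) :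
    laplace P t ≤ (μ Sᶜ).toReal + (μ S).toReal * laplace P ∞ := by
  have hφc := continuous_laplace P hP
  refine le_measure_compl_add_of_le_integral hS (X := fun n ω => Lstar T n ω * t)
    (fun n => (measurable_Lstar hT n).mul_const _) ?_ hφc.measurable hφc.continuousAt
    (laplace_nonneg P) (laplace_le_one P) fun n => (hsub t n).trans ?_
  · filter_upwards [hLstar] with ω hω hωS
    simpa [ENNReal.top_mul (ENNReal.coe_ne_zero.2 ht.ne')]
      using ENNReal.Tendsto.mul_const (b := t) (hω hωS) (Or.inr ENNReal.coe_ne_top)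
  · exact integral_tprod_branchL_le_integral_Lstar (laplace_antitone P) hφc (laplace_nonneg P)
      (laplace_le_one P) hT n t

theorem exploding_weights_force_trivial_solution
    {Ω : Type*} [MeasurableSpace Ω] (μ : Measure Ω) [IsProbabilityMeasure μ]
    (C : UHTree → Ω → ℝ≥0∞) (T : UHTree → ℕ → Ω → ℝ≥0∞)
    (hmeas : ∀ v, Measurable (pairRV C T v))
    (P : Measure ℝ≥0∞) [IsProbabilityMeasure P] (hPtop : P {∞} = 0)
    (φ : ℝ≥0∞ → ℝ) (hφ : ∀ y, φ y = ∫ x, eexp (y * x) ∂P)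
    (hsub : ∀ (t : ℝ≥0) (n : ℕ),
      φ t ≤ ∫ ω, ∏' v : {v : UHTree // v.length = n}, φ (branchL T v ω * t) ∂μ)
    (S : Set Ω) (hS : MeasurableSet S) (hSpos : 0 < μ S)
    (hLstar : ∀ᵐ ω ∂μ, ω ∈ S →
      Tendsto (fun n => Lstar T n ω) atTop (nhds (∞ : ℝ≥0∞)))
    (l : ℝ) (hl : Tendsto (fun t : ℝ≥0 => φ t) atTop (nhds l)) :
    (∀ t : ℝ≥0, 0 < t → φ t ≤ (μ Sᶜ).toReal + (μ S).toReal * l)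
    ∧ (∀ t : ℝ≥0, φ t = 1)
    ∧ P = Measure.dirac 0 := by
  obtain rfl : φ = laplace P := funext hφ
  have hT : ∀ v i, Measurable (T v i) :=
    fun v i => (measurable_pi_apply i).comp (measurable_snd.comp (hmeas v))
  have hl_top : l = laplace P ∞ := tendsto_nhds_unique hl
    (((continuous_laplace P hPtop).tendsto ∞).comp (ENNReal.tendsto_coe_nhds_top.2 tendsto_id))
  have hbound (t : ℝ≥0) (ht : 0 < t) : laplace P t ≤ (μ Sᶜ).toReal + (μ S).toReal * l :=
    hl_top ▸ laplace_le_measure_compl_add_of_tendsto_Lstar hT P hPtop hsub hS hLstar ht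
  have hq : (μ Sᶜ).toReal = 1 - (μ S).toReal := probReal_compl_eq_one_sub hS
  have htop : laplace P ∞ = 1 :=
    laplace_top_eq_one P hPtop (ENNReal.toReal_pos hSpos.ne' (measure_ne_top μ S))
      fun t ht => by simpa only [hq, hl_top] using hbound t ht
  have hφ_one (t : ℝ≥0) : laplace P t = 1 :=
    le_antisymm (laplace_le_one P t) (htop ▸ laplace_antitone P le_top)
  exact ⟨hbound, hφ_one, eq_dirac_zero_of_laplace_eq_one P one_ne_zero (by simpa using hφ_one 1)⟩
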